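/- Let 1 < p < 2, c > 0 and d ≥ c, and let γ_p = (c²/(2d)) · { p [ 2(d/c)² + 1/p − 1/2 ] }^{1/p}. Then for every λ ∈ ℝ, min{ c²λ²/2, d|λ| } ≤ φ_p(γ_p λ). -/

import Mathlib

open MeasureTheory Real Filter

noncomputable def phi (p x : ℝ) : ℝ :=
  if |x| ≤ 1 then x ^ 2 / 2 else |x| ^ p / p - 1 / p + 1 / 2

noncomputable def gam (r c d : ℝ) : ℝ :=
  c ^ 2 / (2 * d) * (r * (2 * (d / c) ^ 2 + 1 / r - 1 / 2)) ^ (1 / r)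

/-!
Put `t = d / c`, `γ = gam p c d`, `s = γ |λ|` and `S = γ · 2d / c²`, so that
`S ^ p = p (2t² + 1/p - 1/2)` and the branch `s ^ p / p - 1/p + 1/2` of `φ_p` takes the value
`2t² = d · 2d/c²` at `S`. Bernoulli's inequality gives `(2t) ^ p ≤ S ^ p`, i.e. `c ≤ γ`, which
settles `s ≤ 1`. For `s ≥ S` that branch is at least `s / S` times its value at `S`, which is
`d |λ|`. For `1 < s < S`, the branch minus `c²λ²/2` is a concave function of `s²`, nonnegative at
`s = 1` (because `c ≤ γ`) and zero at `s = S`, hence nonnegative in between.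
-/

open Set

noncomputable def phiTail (p s : ℝ) : ℝ := s ^ p / p - 1 / p + 1 / 2

lemma phi_of_abs_le_one {p x : ℝ} (hx : |x| ≤ 1) : phi p x = x ^ 2 / 2 := if_pos hx

lemma phi_of_one_lt_abs {p x : ℝ} (hx : 1 < |x|) : phi p x = phiTail p |x| := if_neg hx.not_ge

lemma phi_abs (p x : ℝ) : phi p |x| = phi p x := by
  simp only [phi, abs_abs, sq_abs]

lemma two_rpow_le_two_mul {p : ℝ} (hp1 : 1 ≤ p) (hp2 : p ≤ 2) : (2 : ℝ) ^ p ≤ 2 * p := by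
  have bernoulli : (1 + 1 : ℝ) ^ (p - 1) ≤ 1 + (p - 1) * 1 :=
    rpow_one_add_le_one_add_mul_self (by norm_num) (by linarith) (by linarith)
  calc (2 : ℝ) ^ p = 2 * 2 ^ (p - 1) := by
        rw [rpow_sub two_pos, rpow_one]; field_simp
    _ ≤ 2 * p := by norm_num at bernoulli; linarith

lemma two_mul_rpow_le {p t : ℝ} (hp1 : 1 ≤ p) (hp2 : p ≤ 2) (ht : 1 ≤ t) :
    (2 * t) ^ p ≤ 2 * p * t ^ 2 + 1 - p / 2 := by
  have htp : t ^ p ≤ t ^ 2 := by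
    simpa using rpow_le_rpow_of_exponent_le ht hp2
  calc (2 * t) ^ p = 2 ^ p * t ^ p := mul_rpow zero_le_two (by linarith)
    _ ≤ 2 * p * t ^ 2 :=
        mul_le_mul (two_rpow_le_two_mul hp1 hp2) htp (by positivity) (by positivity)
    _ ≤ 2 * p * t ^ 2 + 1 - p / 2 := by linarith

lemma concaveOn_phiTail_sqrt_sub_mul {p κ : ℝ} (hp : 0 < p) (hp2 : p ≤ 2) :
    ConcaveOn ℝ (Ici 0) fun v : ℝ => v ^ (p / 2) / p - 1 / p + 1 / 2 - κ * v / 2 := by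
  refine ⟨convex_Ici 0, fun x hx y hy a b ha hb hab => ?_⟩
  have hrpow := (concaveOn_rpow (by positivity) (by linarith : p / 2 ≤ 1)).2 hx hy ha hb hab
  simp only [smul_eq_mul] at hrpow ⊢
  have hdiv := div_le_div_of_nonneg_right hrpow hp.le
  obtain rfl : b = 1 - a := by linarith
  rw [add_div, mul_div_assoc, mul_div_assoc] at hdiv
  nlinarith

lemma mul_sq_div_two_le_phiTail_of_mem_Icc {p κ a b s : ℝ} (hp : 0 < p) (hp2 : p ≤ 2)
    (ha : 0 ≤ a) (hs : s ∈ Icc a b) (hfa : κ * a ^ 2 / 2 ≤ phiTail p a)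
    (hfb : κ * b ^ 2 / 2 ≤ phiTail p b) : κ * s ^ 2 / 2 ≤ phiTail p s := by
  have hsq : ∀ x : ℝ, 0 ≤ x → (x ^ 2) ^ (p / 2) = x ^ p := fun x hx => by
    rw [← rpow_natCast, ← rpow_mul hx]; norm_num; ring_nf
  have hs0 : 0 ≤ s := ha.trans hs.1
  have hb0 : 0 ≤ b := hs0.trans hs.2
  have hmem : s ^ 2 ∈ segment ℝ (a ^ 2) (b ^ 2) := by
    rw [segment_eq_Icc (pow_le_pow_left₀ ha (hs.1.trans hs.2) 2)]
    exact ⟨pow_le_pow_left₀ ha hs.1 2, pow_le_pow_left₀ hs0 hs.2 2⟩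
  have hmin := (concaveOn_phiTail_sqrt_sub_mul (κ := κ) hp hp2).ge_on_segment
    (mem_Ici.2 (sq_nonneg a)) (mem_Ici.2 (sq_nonneg b)) hmem
  simp only [hsq a ha, hsq b hb0, hsq s hs0] at hmin
  unfold phiTail at *
  linarith [(le_min (sub_nonneg.2 hfa) (sub_nonneg.2 hfb)).trans hmin]

lemma div_mul_phiTail_le_phiTail {p S s : ℝ} (hp1 : 1 ≤ p) (hp2 : p ≤ 2) (hS : 0 < S)
    (hSs : S ≤ s) : s / S * phiTail p S ≤ phiTail p s := by
  have hr : 1 ≤ s / S := (one_le_div hS).2 hSs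
  have hgrowth : S ^ p * (s / S) ≤ s ^ p :=
    calc S ^ p * (s / S) ≤ S ^ p * (s / S) ^ p := by
          gcongr; simpa using rpow_le_rpow_of_exponent_le hr hp1
      _ = s ^ p := by rw [div_rpow (by linarith) hS.le]; field_simp
  have hneg : 1 / 2 - 1 / p ≤ 0 := by
    rw [sub_nonpos, div_le_div_iff₀ two_pos (by linarith)]; linarith
  have hdiv := div_le_div_of_nonneg_right hgrowth (by linarith : (0 : ℝ) ≤ p)
  rw [mul_div_right_comm] at hdiv
  unfold phiTail
  nlinarith

noncomputable def gamRoot (p t : ℝ) : ℝ := (p * (2 * t ^ 2 + 1 / p - 1 / 2)) ^ (1 / p)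

lemma gam_eq (p c d : ℝ) : gam p c d = c ^ 2 / (2 * d) * gamRoot p (d / c) := rfl

lemma mul_two_mul_sq_add_one_div_sub {p t : ℝ} (hp : 0 < p) :
    p * (2 * t ^ 2 + 1 / p - 1 / 2) = 2 * p * t ^ 2 + 1 - p / 2 := by
  field_simp

lemma gamRoot_nonneg {p t : ℝ} (hp : 0 < p) (hp2 : p ≤ 2) : 0 ≤ gamRoot p t := by
  rw [gamRoot, mul_two_mul_sq_add_one_div_sub hp]
  exact rpow_nonneg (by nlinarith [sq_nonneg t]) _

lemma gamRoot_rpow {p t : ℝ} (hp : 0 < p) (hp2 : p ≤ 2) :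
    gamRoot p t ^ p = 2 * p * t ^ 2 + 1 - p / 2 := by
  rw [gamRoot, mul_two_mul_sq_add_one_div_sub hp, ← rpow_mul (by nlinarith [sq_nonneg t]),
    one_div_mul_cancel hp.ne', rpow_one]

lemma phiTail_gamRoot {p t : ℝ} (hp : 0 < p) (hp2 : p ≤ 2) :
    phiTail p (gamRoot p t) = 2 * t ^ 2 := by
  rw [phiTail, gamRoot_rpow hp hp2]; field_simp; ring

lemma two_mul_le_gamRoot {p t : ℝ} (hp1 : 1 ≤ p) (hp2 : p ≤ 2) (ht : 1 ≤ t) :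
    2 * t ≤ gamRoot p t := by
  have hp : 0 < p := by linarith
  rw [← rpow_le_rpow_iff (by linarith) (gamRoot_nonneg hp hp2) hp, gamRoot_rpow hp hp2]
  exact two_mul_rpow_le hp1 hp2 ht

lemma le_gam {p c d : ℝ} (hp1 : 1 ≤ p) (hp2 : p ≤ 2) (hc : 0 < c) (hd : c ≤ d) :
    c ≤ gam p c d := by
  have hd0 : 0 < d := hc.trans_le hd
  calc c = c ^ 2 / (2 * d) * (2 * (d / c)) := by field_simp
    _ ≤ gam p c d := by
        rw [gam_eq]; gcongr; exact two_mul_le_gamRoot hp1 hp2 ((one_le_div hc).2 hd)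

lemma min_le_phi_gam_mul {p c d u : ℝ} (hp1 : 1 ≤ p) (hp2 : p ≤ 2) (hc : 0 < c) (hd : c ≤ d)
    (hu : 0 ≤ u) : min (c ^ 2 * u ^ 2 / 2) (d * u) ≤ phi p (gam p c d * u) := by
  have hp : 0 < p := by linarith
  have hd0 : 0 < d := hc.trans_le hd
  set S := gamRoot p (d / c)
  set γ := gam p c d
  have hS0 : 0 < S :=
    lt_of_lt_of_le (by positivity) (two_mul_le_gamRoot hp1 hp2 ((one_le_div hc).2 hd))
  have hS : phiTail p S = 2 * (d / c) ^ 2 := phiTail_gamRoot hp hp2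
  have hγS : γ = c ^ 2 / (2 * d) * S := gam_eq p c d
  have hcγ : c ≤ γ := le_gam hp1 hp2 hc hd
  have hγ0 : 0 < γ := hc.trans_le hcγ
  rcases le_or_gt (γ * u) 1 with hs1 | hs1
  · rw [phi_of_abs_le_one (by rwa [abs_of_nonneg (by positivity)])]
    calc min (c ^ 2 * u ^ 2 / 2) (d * u) ≤ c ^ 2 * u ^ 2 / 2 := min_le_left _ _
      _ ≤ (γ * u) ^ 2 / 2 := by rw [mul_pow]; gcongr
  rw [phi_of_one_lt_abs (by rwa [abs_of_nonneg (by positivity)]), abs_of_nonneg (by positivity)]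
  rcases le_total S (γ * u) with hSs | hsS
  · calc min (c ^ 2 * u ^ 2 / 2) (d * u) ≤ d * u := min_le_right _ _
      _ = γ * u / S * phiTail p S := by rw [hS, hγS]; field_simp
      _ ≤ phiTail p (γ * u) := div_mul_phiTail_le_phiTail hp1 hp2 hS0 hSs
  · have hfa : (c / γ) ^ 2 * 1 ^ 2 / 2 ≤ phiTail p 1 := by
      have : (c / γ) ^ 2 ≤ 1 := by
        rw [div_pow, div_le_one (by positivity)]; gcongr
      rw [phiTail, one_rpow]; linarith
    have hfb : (c / γ) ^ 2 * S ^ 2 / 2 ≤ phiTail p S := by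
      refine le_of_eq ?_
      rw [hS, hγS]; field_simp
    calc min (c ^ 2 * u ^ 2 / 2) (d * u) ≤ c ^ 2 * u ^ 2 / 2 := min_le_left _ _
      _ = (c / γ) ^ 2 * (γ * u) ^ 2 / 2 := by field_simp
      _ ≤ phiTail p (γ * u) :=
          mul_sq_div_two_le_phiTail_of_mem_Icc hp hp2 zero_le_one ⟨hs1.le, hsS⟩ hfa hfb

theorem stmt_11 (p c d : ℝ) (hp1 : 1 < p) (hp2 : p < 2) (hc : 0 < c) (hd : c ≤ d) (l : ℝ) :
    min (c ^ 2 * l ^ 2 / 2) (d * |l|) ≤ phi p (gam p c d * l) := by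
  have hγ0 : 0 < gam p c d := hc.trans_le (le_gam hp1.le hp2.le hc hd)
  rw [← phi_abs, abs_mul, abs_of_pos hγ0, ← sq_abs l]
  exact min_le_phi_gam_mul hp1.le hp2.le hc hd (abs_nonneg l)
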